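/- arXiv:2104.05210 — 2 statements merged into one kernel-verified Lean document; each statement's English description precedes it below -/
import Mathlib

section
/- Let A = (I_N, d)π and B = (b_{nm}) = (−dᵀ, I_{M−N})π, where π is an M×M permutation matrix and d is a real N×(M−N) matrix. Then for every n ∈ {1,…,M−N} and every x ∈ ℝ³, Σ_{m=1}^{M} b_{nm} · Σ_{J ∋ m} (−1)^{N−k(J,m)} · Δ_J(A) · V(J∖{m}) · exp(Σ_{j ∈ J∖{m}} θ_j(x)) = 0, where the inner sum runs over all N-element index sets J ⊆ {1,…,M} containing m, k(J,m) denotes the position of m in the increasing enumeration of J, and V(S) = ∏_{β<α} (κ_{s_α} − κ_{s_β}) for an index set S = {s₁ < ⋯ < s_{|S|}}. (This expresses the 𝒟′-symmetry 𝒟′ψ(x,κ)ᵀ = 0 of the Sato adjoint eigenfunction, cleared of the factor τ(x).) -/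
/-!
Pair each `J ∋ m` with `S = J ∖ {m}`. Moving column `m` of `Δ_J(A)` to the front costs the
sign `(-1)^(k(J,m)-1)`, so after exchanging the sums over `m` and `S` the coefficient of
`V(S) e^{Σ_{j∈S} θ_j(x)}` is, up to `(-1)^(N-1)`, `Σ_m b_{nm} det(A_m, A_{s_1}, …, A_{s_{N-1}})`,
where `A_j` is the `j`-th column of `A`; adding the terms with `m ∈ S` changes nothing, as they
have a repeated column. By linearity of the determinant in its first column this sum is
`det(A b_n, A_{s_1}, …)`, and `A b_n = 0` because `(I, d) (−dᵀ, I)ᵀ = −d + d = 0`.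
-/

open Finset Matrix

noncomputable section

/-- `θ_j(x) = κ_j x₁ + κ_j² x₂ + κ_j³ x₃`. -/
def theta {M : ℕ} (κ : Fin M → ℝ) (j : Fin M) (x : Fin 3 → ℝ) : ℝ :=
  κ j * x 0 + κ j ^ 2 * x 1 + κ j ^ 3 * x 2

/-- The increasing enumeration of a `k`-element index set `s ⊆ {1,…,M}`. -/
def cols {M : ℕ} (k : ℕ) (s : Finset (Fin M)) (h : s.card = k) : Fin k → Fin M :=
  fun i => (s.orderIsoOfFin h i : Fin M)

/-- The Plücker coordinate `Δ_J(A)`: the `N×N` minor of `A` formed by the columns in `J`. -/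
def minor {N M : ℕ} (A : Matrix (Fin N) (Fin M) ℝ) (s : Finset (Fin M))
    (h : s.card = N) : ℝ :=
  (A.submatrix id (cols N s h)).det

/-- The Vandermonde-type factor `V(S) = ∏_{β<α} (κ_{s_α} − κ_{s_β})` for an index set
`S = {s₁ < ⋯ < s_k}`. -/
def vprod {M : ℕ} (k : ℕ) (κ : Fin M → ℝ) (s : Finset (Fin M)) (h : s.card = k) : ℝ :=
  ∏ p ∈ Finset.univ.filter (fun p : Fin k × Fin k => p.1 < p.2),
    (κ (cols k s h p.2) - κ (cols k s h p.1))

theorem Finset.orderEmbOfFin_erase_apply {α : Type*} [LinearOrder α] {s : Finset α} {k : ℕ}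
    {m : α} (hs : s.card = k + 1) (hm : m ∈ s) (h : (s.erase m).card = k) (j : Fin k) :
    (s.erase m).orderEmbOfFin h j =
      s.orderEmbOfFin hs (((s.orderIsoOfFin hs).symm ⟨m, hm⟩).succAbove j) := by
  set p := (s.orderIsoOfFin hs).symm ⟨m, hm⟩
  have hp : s.orderEmbOfFin hs p = m := by simp [p, ← coe_orderIsoOfFin_apply]
  refine (congrFun (orderEmbOfFin_unique h (fun j => mem_erase.2 ⟨fun he => ?_, by simp⟩)
    ((s.orderEmbOfFin hs).strictMono.comp (Fin.strictMono_succAbove p))) j).symm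
  exact Fin.succAbove_ne p j ((s.orderEmbOfFin hs).injective (he.trans hp.symm))

theorem Finset.orderEmbOfFin_comp_cycleRange_symm {α : Type*} [LinearOrder α] {s : Finset α}
    {k : ℕ} {m : α} (hs : s.card = k + 1) (hm : m ∈ s) (h : (s.erase m).card = k) :
    s.orderEmbOfFin hs ∘ ((s.orderIsoOfFin hs).symm ⟨m, hm⟩).cycleRange.symm =
      Fin.cons m ((s.erase m).orderEmbOfFin h) := by
  funext i
  induction i using Fin.cases with
  | zero => simp [← coe_orderIsoOfFin_apply]
  | succ j => simp [Fin.cycleRange_symm_succ, orderEmbOfFin_erase_apply hs hm h]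

theorem neg_one_pow_sub {R : Type*} [Ring R] {n i : ℕ} (h : i ≤ n) :
    (-1 : R) ^ (n - i) = (-1) ^ n * (-1) ^ i := by
  conv_rhs => rw [← Nat.sub_add_cancel h]
  rw [pow_add, mul_assoc, ← pow_add, ← two_mul, pow_mul, neg_one_sq, one_pow, mul_one]

lemma cols_eq_orderEmbOfFin {M k : ℕ} (s : Finset (Fin M)) (h : s.card = k) :
    cols k s h = s.orderEmbOfFin h :=
  rfl

lemma det_submatrix_cons_cols_erase {N M : ℕ} (A : Matrix (Fin (N + 1)) (Fin M) ℝ)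
    {s : Finset (Fin M)} {m : Fin M} (hs : s.card = N + 1) (hm : m ∈ s)
    (h : (s.erase m).card = N) :
    (A.submatrix id (Fin.cons m (cols N (s.erase m) h))).det =
      (-1) ^ (((s.orderIsoOfFin hs).symm ⟨m, hm⟩ : Fin (N + 1)) : ℕ) * minor A s hs := by
  rw [cols_eq_orderEmbOfFin, ← orderEmbOfFin_comp_cycleRange_symm hs hm h]
  refine (det_permute' _ (A.submatrix id (s.orderEmbOfFin hs))).trans ?_
  simp [Fin.sign_cycleRange, minor, cols_eq_orderEmbOfFin]

lemma det_submatrix_cons_eq_zero_of_mem_range {R ι : Type*} [CommRing R] {N : ℕ}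
    (A : Matrix (Fin (N + 1)) ι R) {m : ι} {c : Fin N → ι} (hm : m ∈ Set.range c) :
    (A.submatrix id (Fin.cons m c)).det = 0 := by
  obtain ⟨j, rfl⟩ := hm
  exact det_zero_of_column_eq (Fin.succ_ne_zero j).symm fun i => rfl

lemma sum_mul_det_submatrix_cons_eq_zero {R ι : Type*} [CommRing R] [Fintype ι] {N : ℕ}
    (A : Matrix (Fin (N + 1)) ι R) {b : ι → R} (hb : A *ᵥ b = 0) (c : Fin N → ι) :
    ∑ m, b m * (A.submatrix id (Fin.cons m c)).det = 0 := by
  set v : Fin (N + 1) → Fin (N + 1) → R := Fin.cons 0 fun j i => A i (c j)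
  have hcol : ∀ m, (A.submatrix id (Fin.cons m c))ᵀ = Function.update v 0 (Aᵀ m) := by
    intro m
    rw [Fin.update_cons_zero]
    ext i j
    induction i using Fin.cases <;> rfl
  have hsum : ∑ m, b m • Aᵀ m = 0 := by
    ext i
    simpa [mulVec, dotProduct, mul_comm] using congrFun hb i
  calc ∑ m, b m * (A.submatrix id (Fin.cons m c)).det
      = ∑ m, detRowAlternating (Function.update v 0 (b m • Aᵀ m)) := by
        simp_rw [← det_transpose (A.submatrix _ _), hcol, AlternatingMap.map_update_smul]; rfl
    _ = detRowAlternating (Function.update v 0 (∑ m, b m • Aᵀ m)) :=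
        (MultilinearMap.map_update_sum _ _ _ _ _).symm
    _ = 0 := by
        rw [hsum, Fin.update_cons_zero]
        exact det_eq_zero_of_row_eq_zero 0 fun _ => rfl

theorem Fintype.sum_erase_eq_sum_of_eq_zero {α M : Type*} [Fintype α] [DecidableEq α]
    [AddCommMonoid M] {k : ℕ} (m : α) (g : {S : Finset α // S.card = k} → M)
    (hg : ∀ S, m ∈ S.1 → g S = 0) :
    ∑ s : {s : Finset α // s.card = k + 1 ∧ m ∈ s},
      g ⟨s.1.erase m, by rw [card_erase_of_mem s.2.2, s.2.1]; rfl⟩ = ∑ S, g S := by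
  refine Fintype.sum_of_injective _ (fun s t hst => ?_) _ g (fun S hS => ?_) fun _ => rfl
  · rw [Subtype.ext_iff, ← insert_erase s.2.2, ← insert_erase t.2.2]
    exact congrArg (insert m ·.1) hst
  · refine hg S (by_contra fun hm => hS ⟨⟨insert m S.1, ?_, mem_insert_self m S.1⟩, ?_⟩)
    · rw [card_insert_of_notMem hm, S.2]
    · exact Subtype.ext (erase_insert hm)

lemma sum_mul_sum_signed_minor_mul_eq_zero {N M : ℕ} (A : Matrix (Fin (N + 1)) (Fin M) ℝ)
    {b : Fin M → ℝ} (hb : A *ᵥ b = 0) (w : {S : Finset (Fin M) // S.card = N} → ℝ) :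
    ∑ m, b m * ∑ s : {s : Finset (Fin M) // s.card = N + 1 ∧ m ∈ s},
      (-1) ^ (N - (((s.1.orderIsoOfFin s.2.1).symm ⟨m, s.2.2⟩ : Fin (N + 1)) : ℕ)) *
        minor A s.1 s.2.1 * w ⟨s.1.erase m, by simp [s.2.1, s.2.2]⟩ = 0 := by
  have hterm : ∀ m, ∑ s : {s : Finset (Fin M) // s.card = N + 1 ∧ m ∈ s},
      (-1) ^ (N - (((s.1.orderIsoOfFin s.2.1).symm ⟨m, s.2.2⟩ : Fin (N + 1)) : ℕ)) *
        minor A s.1 s.2.1 * w ⟨s.1.erase m, by simp [s.2.1, s.2.2]⟩ =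
      ∑ S, (-1) ^ N * w S * (A.submatrix id (Fin.cons m (cols N S.1 S.2))).det := by
    intro m
    rw [← Fintype.sum_erase_eq_sum_of_eq_zero m]
    · refine Fintype.sum_congr _ _ fun s => ?_
      rw [det_submatrix_cons_cols_erase A s.2.1 s.2.2, neg_one_pow_sub (Fin.is_le _)]
      ring
    · intro S hm
      have hm' : m ∈ Set.range (cols N S.1 S.2) :=
        ⟨(S.1.orderIsoOfFin S.2).symm ⟨m, hm⟩, by simp [cols]⟩
      rw [det_submatrix_cons_eq_zero_of_mem_range A hm', mul_zero]
  calc _ = ∑ m, ∑ S, (-1) ^ N * w S *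
          (b m * (A.submatrix id (Fin.cons m (cols N S.1 S.2))).det) := by
        simp_rw [hterm, Finset.mul_sum, mul_left_comm (b _)]
    _ = ∑ S, (-1) ^ N * w S *
          ∑ m, b m * (A.submatrix id (Fin.cons m (cols N S.1 S.2))).det := by
        rw [Finset.sum_comm]
        simp_rw [Finset.mul_sum]
    _ = 0 := by simp [sum_mul_det_submatrix_cons_eq_zero A hb]

lemma fromCols_one_mul_transpose_fromCols_neg_transpose_one {R m n : Type*} [Ring R]
    [Fintype m] [Fintype n] [DecidableEq m] [DecidableEq n] (d : Matrix m n R) :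
    fromCols (1 : Matrix m m R) d * (fromCols (-dᵀ) (1 : Matrix n n R))ᵀ = 0 := by
  simp [transpose_fromCols, fromCols_mul_fromRows]

lemma submatrix_mul_transpose_submatrix {R l m n o : Type*} [AddCommMonoid R] [Mul R] [Fintype l]
    [Fintype o] (X : Matrix m l R) (Y : Matrix n l R) (e : o ≃ l) :
    X.submatrix id e * (Y.submatrix id e)ᵀ = X * Yᵀ := by
  rw [transpose_submatrix, submatrix_mul_equiv, submatrix_id_id]

/-- **`𝒟′`-symmetry of the Sato adjoint eigenfunction.**
Let `A = (I_N, d)π` and `B = (−dᵀ, I_{M−N})π` (blocks with columns permuted by `π`),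
with `1 ≤ N < M = N + K` and `κ₁ < ⋯ < κ_M`. Then for every `n ∈ {1,…,M−N}` and `x ∈ ℝ³`:
`Σ_{m=1}^{M} b_{nm} Σ_{J ∋ m} (−1)^{N−k(J,m)} Δ_J(A) V(J∖{m}) e^{Σ_{j∈J∖{m}} θ_j(x)} = 0`,
where `k(J,m)` is the (1-based) position of `m` in the increasing enumeration of `J`
(so with the 0-based position `pos`, the exponent `N − k(J,m)` is `N − 1 − pos`). -/
theorem sato_Dprime_symmetry (N K : ℕ)
    (κ : Fin (N + K) → ℝ)
    (π : Equiv.Perm (Fin (N + K))) (d : Matrix (Fin N) (Fin K) ℝ)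
    (A : Matrix (Fin N) (Fin (N + K)) ℝ)
    (hA : A = (Matrix.fromCols 1 d).submatrix id (fun j => finSumFinEquiv.symm (π⁻¹ j)))
    (B : Matrix (Fin K) (Fin (N + K)) ℝ)
    (hB : B = (Matrix.fromCols (-dᵀ) 1).submatrix id (fun j => finSumFinEquiv.symm (π⁻¹ j)))
    (n : Fin K) (x : Fin 3 → ℝ) :
    ∑ m : Fin (N + K), B n m *
      ∑ s : {s : Finset (Fin (N + K)) // s.card = N ∧ m ∈ s},
        (-1 : ℝ) ^ (N - 1 - (((s.1.orderIsoOfFin s.2.1).symm ⟨m, s.2.2⟩ : Fin N) : ℕ)) *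
          minor A s.1 s.2.1 *
          vprod (N - 1) κ (s.1.erase m)
            (by rw [Finset.card_erase_of_mem s.2.2, s.2.1]) *
          Real.exp (∑ j ∈ s.1.erase m, theta κ j x) = 0 := by
  cases N with
  | zero =>
    refine Finset.sum_eq_zero fun m _ => ?_
    have : IsEmpty {s : Finset (Fin (0 + K)) // s.card = 0 ∧ m ∈ s} :=
      ⟨fun s => notMem_empty m (card_eq_zero.1 s.2.1 ▸ s.2.2)⟩
    rw [Finset.univ_eq_empty, Finset.sum_empty, mul_zero]
  | succ N =>
    have hAB : A * Bᵀ = 0 := by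
      subst hA hB
      exact (submatrix_mul_transpose_submatrix _ _ (π⁻¹.trans finSumFinEquiv.symm)).trans
        (fromCols_one_mul_transpose_fromCols_neg_transpose_one d)
    have hker : A *ᵥ B n = 0 := funext fun i => congrFun (congrFun hAB i) n
    simpa only [mul_assoc, Nat.add_sub_cancel] using sum_mul_sum_signed_minor_mul_eq_zero A hker
      fun S => vprod N κ S.1 S.2 * Real.exp (∑ j ∈ S.1, theta κ j x)

end
end

section
/- Let 1 ≤ N < M, let d be a real N×(M−N) matrix, and set A = (I_N, d) and B = (−dᵀ, I_{M−N}). Then for every pair of complementary index sets J = {j₁ < ⋯ < j_N} and I = {i₁ < ⋯ < i_{M−N}} with I ∪ J = {1,…,M} and I ∩ J = ∅, the complementary minors satisfy Δ_I(B) = σ(J,I) · Δ_J(A), where σ(J,I) = (−1)^{N(N+1)/2 + j₁ + ⋯ + j_N}. -/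
open Finset Matrix

noncomputable section

/-!
Let `W` be the `M × K` matrix whose columns are the standard basis vectors `e_i`, `i ∈ I`, and
consider the square matrix `C = (Aᵀ | W)`. In the column splitting `{1,…,N} ⊔ {N+1,…,M}` it is
`[[1, W₁], [dᵀ, W₂]]`, so by the Schur complement `det C = det (W₂ - dᵀ W₁) = det (B W) = Δ_I(B)`.
Reordering its rows so that those in `J` come first, followed by those in `I`, makes it block
lower triangular `[[A_Jᵀ, 0], [A_Iᵀ, 1]]`, of determinant `Δ_J(A)`. The reordering is the shuffle
permutation of `(J, I)`, whose inversions are the pairs `i < j` with `i ∈ I`, `j ∈ J`; there are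
`∑ (j_a - a)` of them, which has the parity of `N(N+1)/2 + ∑ j_a` (with 1-based `j_a`).
-/

section Determinant

variable {R : Type*} [CommRing R] {n m ι : Type*} [Fintype n] [Fintype m] [DecidableEq n]
  [DecidableEq m]

theorem det_fromCols_fromCols_one_transpose (d : Matrix n m R) (W : Matrix (n ⊕ m) m R) :
    det (fromCols (fromCols 1 d)ᵀ W) = det ((fromCols (-dᵀ) 1 : Matrix m (n ⊕ m) R) * W) := by
  rw [← fromRows_toRows W, transpose_fromCols, transpose_one, fromCols_fromRows_eq_fromBlocks,
    det_fromBlocks_one₁₁, fromCols_mul_fromRows, Matrix.neg_mul, Matrix.one_mul, neg_add_eq_sub]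

theorem det_submatrix_fromCols_transpose_one_submatrix [Fintype ι] [DecidableEq ι]
    (X : Matrix n ι R) (σ : n ⊕ m ≃ ι) :
    det ((fromCols Xᵀ ((1 : Matrix ι ι R).submatrix id (σ ∘ Sum.inr))).submatrix σ id) =
      det (X.submatrix id (σ ∘ Sum.inl)) := by
  have hblocks : (fromCols Xᵀ ((1 : Matrix ι ι R).submatrix id (σ ∘ Sum.inr))).submatrix σ id =
      fromBlocks (X.submatrix id (σ ∘ Sum.inl))ᵀ 0 (X.submatrix id (σ ∘ Sum.inr))ᵀ 1 := by
    ext (a | b) (c | c) <;> simp [one_apply]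
  rw [hblocks, det_fromBlocks_zero₁₂, det_one, mul_one, det_transpose]

theorem sign_mul_det_submatrix_fromCols_neg_transpose_one (d : Matrix n m R)
    (σ : Equiv.Perm (n ⊕ m)) :
    Equiv.Perm.sign σ * det ((fromCols (-dᵀ) 1).submatrix id (σ ∘ Sum.inr)) =
      det ((fromCols 1 d).submatrix id (σ ∘ Sum.inl)) := by
  rw [← det_submatrix_fromCols_transpose_one_submatrix _ σ, det_permute,
    det_fromCols_fromCols_one_transpose]
  exact congrArg _ (congrArg det (mul_submatrix_one (Equiv.refl _) _ _)).symm

theorem sign_mul_det_submatrix_fromCols_neg_transpose_one_of_equiv [Fintype ι] [DecidableEq ι]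
    (d : Matrix n m R) (e : n ⊕ m ≃ ι) (ρ : Equiv.Perm ι) :
    Equiv.Perm.sign ρ *
        det (((fromCols (-dᵀ) 1).submatrix id e.symm).submatrix id (ρ ∘ e ∘ Sum.inr)) =
      det (((fromCols 1 d).submatrix id e.symm).submatrix id (ρ ∘ e ∘ Sum.inl)) := by
  rw [← Equiv.Perm.sign_permCongr e.symm ρ, submatrix_submatrix, submatrix_submatrix]
  exact sign_mul_det_submatrix_fromCols_neg_transpose_one d _

end Determinant

theorem Fin.sum_val_add_one (n : ℕ) : ∑ a : Fin n, ((a : ℕ) + 1) = n * (n + 1) / 2 := by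
  have h := sum_range_id (n + 1)
  rw [sum_range_succ', Nat.add_sub_cancel, add_zero, mul_comm] at h
  rw [Fin.sum_univ_eq_sum_range (fun i => i + 1), h]

section Shuffle

variable {n m : ℕ}

theorem Fin.castAdd_lt_natAdd (a : Fin n) (b : Fin m) : Fin.castAdd m a < Fin.natAdd n b := by
  simp only [Fin.lt_def, Fin.val_castAdd, Fin.val_natAdd]
  omega

theorem Fin.exists_perm_comp_castAdd_comp_natAdd {f : Fin n → Fin (n + m)}
    {g : Fin m → Fin (n + m)} (hf : Function.Injective f) (hg : Function.Injective g)
    (hfg : ∀ a b, f a ≠ g b) :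
    ∃ ρ : Equiv.Perm (Fin (n + m)), ρ ∘ Fin.castAdd m = f ∧ ρ ∘ Fin.natAdd n = g :=
  ⟨Equiv.ofBijective (Fin.append f g)
      (Finite.injective_iff_bijective.1 (Fin.append_injective_iff.2 ⟨hf, hg, hfg⟩)),
    funext (Fin.append_left f g), funext (Fin.append_right f g)⟩

theorem Equiv.Perm.sign_eq_neg_one_pow_sum_card_of_strictMono (ρ : Equiv.Perm (Fin (n + m)))
    (hl : StrictMono (ρ ∘ Fin.castAdd m)) (hr : StrictMono (ρ ∘ Fin.natAdd n)) :
    Equiv.Perm.sign ρ =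
      (-1) ^ ∑ a : Fin n, #{b | ρ (Fin.natAdd n b) < ρ (Fin.castAdd m a)} := by
  rw [Equiv.Perm.sign_eq_prod_prod_Iio]
  simp_rw [← filter_gt_eq_Iio, prod_filter, Fin.prod_univ_add]
  have hll : ∀ a a' : Fin n, (if Fin.castAdd m a' < Fin.castAdd m a then
      (if ρ (Fin.castAdd m a') < ρ (Fin.castAdd m a) then 1 else -1) else 1 : ℤˣ) = 1 := by
    intro a a'
    split_ifs with h h'
    · rfl
    · exact absurd (hl ((Fin.strictMono_castAdd m).lt_iff_lt.1 h)) h'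
    · rfl
  have hrr : ∀ b b' : Fin m, (if Fin.natAdd n b' < Fin.natAdd n b then
      (if ρ (Fin.natAdd n b') < ρ (Fin.natAdd n b) then 1 else -1) else 1 : ℤˣ) = 1 := by
    intro b b'
    split_ifs with h h'
    · rfl
    · exact absurd (hr ((Fin.natAdd_lt_natAdd_iff n).1 h)) h'
    · rfl
  have hrl : ∀ a b, (if Fin.natAdd n b < Fin.castAdd m a then
      (if ρ (Fin.natAdd n b) < ρ (Fin.castAdd m a) then 1 else -1) else 1 : ℤˣ) = 1 :=
    fun a b => if_neg (Fin.castAdd_lt_natAdd a b).asymm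
  have hlr : ∀ a b, (if Fin.castAdd m a < Fin.natAdd n b then
      (if ρ (Fin.castAdd m a) < ρ (Fin.natAdd n b) then 1 else -1) else 1 : ℤˣ) =
      if ρ (Fin.natAdd n b) < ρ (Fin.castAdd m a) then -1 else 1 := by
    intro a b
    have hne : ρ (Fin.castAdd m a) ≠ ρ (Fin.natAdd n b) :=
      ρ.injective.ne (Fin.castAdd_lt_natAdd a b).ne
    rw [if_pos (Fin.castAdd_lt_natAdd a b)]
    by_cases h : ρ (Fin.natAdd n b) < ρ (Fin.castAdd m a)
    · rw [if_pos h, if_neg h.asymm]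
    · rw [if_neg h, if_pos ((not_lt.1 h).lt_of_ne hne)]
  simp only [hll, hrr, hrl, hlr, prod_const_one, one_mul, mul_one]
  rw [prod_comm, ← prod_pow_eq_pow_sum]
  refine prod_congr rfl fun a _ => ?_
  rw [prod_ite, prod_const_one, mul_one, prod_const]

theorem card_filter_natAdd_lt_add_eq (ρ : Equiv.Perm (Fin (n + m)))
    (hl : StrictMono (ρ ∘ Fin.castAdd m)) (a : Fin n) :
    #{b | ρ (Fin.natAdd n b) < ρ (Fin.castAdd m a)} + a = ρ (Fin.castAdd m a) := by
  set c := ρ (Fin.castAdd m a)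
  have hall : #{x | ρ x < c} = c := by
    rw [← Fin.card_Iio c, ← filter_gt_eq_Iio, card_filter, card_filter]
    exact Equiv.sum_comp ρ (fun y => if y < c then 1 else 0)
  have hsplit :
      #{x | ρ x < c} = #{a' | ρ (Fin.castAdd m a') < c} + #{b | ρ (Fin.natAdd n b) < c} := by
    simp only [card_filter, Fin.sum_univ_add]
  have hleft : #{a' | ρ (Fin.castAdd m a') < c} = a := by
    rw [← Fin.card_Iio a, ← filter_gt_eq_Iio]
    exact congrArg card (filter_congr fun a' _ => hl.lt_iff_lt)
  omega

end Shuffle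

theorem complementary_minor_duality_general (N K : ℕ)
    (d : Matrix (Fin N) (Fin K) ℝ)
    (A : Matrix (Fin N) (Fin (N + K)) ℝ)
    (hA : A = (Matrix.fromCols 1 d).submatrix id finSumFinEquiv.symm)
    (B : Matrix (Fin K) (Fin (N + K)) ℝ)
    (hB : B = (Matrix.fromCols (-dᵀ) 1).submatrix id finSumFinEquiv.symm)
    (J I : Finset (Fin (N + K))) (hJ : J.card = N) (hI : I.card = K)
    (hInter : I ∩ J = ∅) :
    (B.submatrix id (cols K I hI)).det =
      (-1 : ℝ) ^ (N * (N + 1) / 2 + ∑ j ∈ J, ((j : ℕ) + 1)) *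
        (A.submatrix id (cols N J hJ)).det := by
  subst hA hB
  set f := cols N J hJ
  set g := cols K I hI
  have hfg : ∀ a b, f a ≠ g b := fun a b h =>
    Finset.disjoint_left.1 (Finset.disjoint_iff_inter_eq_empty.2 hInter)
      (I.orderEmbOfFin_mem hI b) (show g b ∈ J from h ▸ J.orderEmbOfFin_mem hJ a)
  obtain ⟨ρ, hρl, hρr⟩ := Fin.exists_perm_comp_castAdd_comp_natAdd
    (J.orderEmbOfFin hJ).injective (I.orderEmbOfFin hI).injective hfg
  have hl : StrictMono (ρ ∘ Fin.castAdd K) := hρl ▸ (J.orderEmbOfFin hJ).strictMono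
  have hr : StrictMono (ρ ∘ Fin.natAdd N) := hρr ▸ (I.orderEmbOfFin hI).strictMono
  set X := ∑ a : Fin N, #{b | ρ (Fin.natAdd N b) < ρ (Fin.castAdd K a)}
  have hsign : (Equiv.Perm.sign ρ : ℝ) = (-1) ^ X := by
    rw [Equiv.Perm.sign_eq_neg_one_pow_sum_card_of_strictMono ρ hl hr]
    push_cast
    rfl
  have hsum : ∑ j ∈ J, ((j : ℕ) + 1) = X + N * (N + 1) / 2 := by
    rw [← map_orderEmbOfFin_univ J hJ, sum_map, ← Fin.sum_val_add_one, ← sum_add_distrib]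
    refine sum_congr rfl fun a _ => ?_
    rw [← add_assoc, card_filter_natAdd_lt_add_eq ρ hl a]
    exact congrArg (fun x : Fin (N + K) => (x : ℕ) + 1) (congrFun hρl a).symm
  have hduality := sign_mul_det_submatrix_fromCols_neg_transpose_one_of_equiv d finSumFinEquiv ρ
  rw [show ρ ∘ finSumFinEquiv ∘ Sum.inl = f from hρl,
    show ρ ∘ finSumFinEquiv ∘ Sum.inr = g from hρr, hsign] at hduality
  rw [hsum, ← hduality, ← mul_assoc, ← pow_add,
    show N * (N + 1) / 2 + (X + N * (N + 1) / 2) + X = 2 * (X + N * (N + 1) / 2) by ring,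
    pow_mul, neg_one_sq, one_pow, one_mul]

/-- **duality of complementary minors.** Let `1 ≤ N < M = N + K`,
`A = (I_N, d)` and `B = (−dᵀ, I_{M−N})`. For every pair of complementary index sets
`J = {j₁ < ⋯ < j_N}` and `I = {i₁ < ⋯ < i_{M−N}}` (`I ∪ J = {1,…,M}`, `I ∩ J = ∅`),
the complementary minors satisfy `Δ_I(B) = σ(J,I) Δ_J(A)` with
`σ(J,I) = (−1)^{N(N+1)/2 + j₁ + ⋯ + j_N}` (indices `j` being 1-based). -/
theorem complementary_minor_duality (N K : ℕ) (hN : 1 ≤ N) (hK : 1 ≤ K)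
    (d : Matrix (Fin N) (Fin K) ℝ)
    (A : Matrix (Fin N) (Fin (N + K)) ℝ)
    (hA : A = (Matrix.fromCols 1 d).submatrix id finSumFinEquiv.symm)
    (B : Matrix (Fin K) (Fin (N + K)) ℝ)
    (hB : B = (Matrix.fromCols (-dᵀ) 1).submatrix id finSumFinEquiv.symm)
    (J I : Finset (Fin (N + K))) (hJ : J.card = N) (hI : I.card = K)
    (hUnion : I ∪ J = Finset.univ) (hInter : I ∩ J = ∅) :
    (B.submatrix id (cols K I hI)).det =
      (-1 : ℝ) ^ (N * (N + 1) / 2 + ∑ j ∈ J, ((j : ℕ) + 1)) *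
        (A.submatrix id (cols N J hJ)).det :=
  complementary_minor_duality_general N K d A hA B hB J I hJ hI hInter
end
end
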